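/- For γ > 1 and s > 0 the following hold: (a) there exist unique ρ_*(s) > 0 and ρ^*(s) > 0 with ρ_*(s)^{γ−1}/2 + h(ρ_*(s)) = s and h(ρ^*(s)) = s, and ρ_*(s) < ρ^*(s); (b) the function M(ρ) = 2ρ²(s − h(ρ)) is strictly decreasing on the interval [ρ_*(s), ρ^*(s)], with M(ρ_*(s)) = ρ_*(s)^{γ+1} =: Σ(s) and M(ρ^*(s)) = 0; (c) consequently, for every M ∈ [0, Σ(s)] there is a unique ρ ∈ [ρ_*(s), ρ^*(s)] satisfying M/(2ρ²) + h(ρ) = s (the subsonic branch of the Bernoulli relation). -/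

import Mathlib

open scoped Topology
open Filter Set MeasureTheory

noncomputable section

/-- Partial derivative in the axial (`x`) direction for functions on `ℝ × ℝ`. -/
def pdX (F : ℝ × ℝ → ℝ) (p : ℝ × ℝ) : ℝ := fderiv ℝ F p (1, 0)

/-- Partial derivative in the radial (`r`) direction for functions on `ℝ × ℝ`. -/
def pdR (F : ℝ × ℝ → ℝ) (p : ℝ × ℝ) : ℝ := fderiv ℝ F p (0, 1)

/-- Pressure `P(ρ) = ρ^γ/γ`. -/
def Pres (γ ρ : ℝ) : ℝ := ρ ^ γ / γ

/-- Enthalpy `h(ρ) = ρ^(γ-1)/(γ-1)`. -/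
def enth (γ ρ : ℝ) : ℝ := ρ ^ (γ - 1) / (γ - 1)

/-- Sound speed `c(ρ) = ρ^((γ-1)/2)`. -/
def sound (γ ρ : ℝ) : ℝ := ρ ^ ((γ - 1) / 2)

/-- Meridian domain `Ω = {(x,r) : r > f(x)}`. -/
def mdom (f : ℝ → ℝ) : Set (ℝ × ℝ) := {p | f p.1 < p.2}

/-- `α`-Hölder continuity (with some constant) on a set, for functions on `ℝ²`. -/
def HolderOn (α : ℝ) (g : ℝ × ℝ → ℝ) (s : Set (ℝ × ℝ)) : Prop :=
  ∃ C : ℝ, ∀ p ∈ s, ∀ q ∈ s, |g p - g q| ≤ C * dist p q ^ α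

/-- `α`-Hölder continuity (with some constant) on a set, for functions on `ℝ`. -/
def HolderOn1 (α : ℝ) (g : ℝ → ℝ) (s : Set ℝ) : Prop :=
  ∃ C : ℝ, ∀ p ∈ s, ∀ q ∈ s, |g p - g q| ≤ C * |p - q| ^ α

/-- `g ∈ C^{1,α}(Ω) ∩ C^{α}(Ω̄)`: differentiable in `Ω` with locally `α`-Hölder
partial derivatives, and `α`-Hölder continuous up to the boundary. -/
def C1HolderOn (α : ℝ) (g : ℝ × ℝ → ℝ) (Ω : Set (ℝ × ℝ)) : Prop :=
  DifferentiableOn ℝ g Ω ∧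
  (∀ K : Set (ℝ × ℝ), IsCompact K → K ⊆ Ω → HolderOn α (pdX g) K ∧ HolderOn α (pdR g) K) ∧
  HolderOn α g (closure Ω)

/-- The steady axisymmetric isentropic Euler system, pointwise at `p = (x,r)`. -/
def EulerAt (γ : ℝ) (ρ u v : ℝ × ℝ → ℝ) (p : ℝ × ℝ) : Prop :=
  pdX (fun q => q.2 * ρ q * u q) p + pdR (fun q => q.2 * ρ q * v q) p = 0 ∧
  pdX (fun q => q.2 * ρ q * u q ^ 2) p + pdR (fun q => q.2 * ρ q * u q * v q) p
      + p.2 * pdX (fun q => Pres γ (ρ q)) p = 0 ∧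
  pdX (fun q => q.2 * ρ q * u q * v q) p + pdR (fun q => q.2 * ρ q * v q ^ 2) p
      + p.2 * pdR (fun q => Pres γ (ρ q)) p = 0


/-!
With `β = γ - 1`, both defining equations have the form `c ρ^β = s`, with `c = 1/2 + 1/β` for
`ρ_*` and `c = 1/β` for `ρ^*`; hence each has exactly one positive root, and the larger constant
gives the smaller root. Writing `B(ρ) = ρ^β/2 + h(ρ)` (the Bernoulli function at a sonic state),
one computes `M'(ρ) = 4ρ (s - B(ρ))`. Since `B` is increasing and `B(ρ_*) = s`, `M` is strictly
decreasing beyond `ρ_*`. As `M/(2ρ²) + h(ρ) = s` just says `M(ρ) = M`, part (c) is the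
intermediate value theorem for the strictly decreasing continuous function `M` on `[ρ_*, ρ^*]`.
-/

theorem StrictAntiOn.existsUnique_eq_of_continuousOn {α δ : Type*}
    [ConditionallyCompleteLinearOrder α] [TopologicalSpace α] [OrderTopology α] [DenselyOrdered α]
    [LinearOrder δ] [TopologicalSpace δ] [OrderClosedTopology δ]
    {f : α → δ} {a b : α} {y : δ} (hf : StrictAntiOn f (Icc a b)) (hab : a ≤ b)
    (hcont : ContinuousOn f (Icc a b)) (hy : y ∈ Icc (f b) (f a)) :
    ∃! x, x ∈ Icc a b ∧ f x = y := by
  obtain ⟨x, hx, hfx⟩ := intermediate_value_Icc' hab hcont hy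
  exact ⟨x, ⟨hx, hfx⟩, fun x' ⟨hx', hfx'⟩ => hf.injOn hx' hx (hfx'.trans hfx.symm)⟩

theorem Real.existsUnique_pos_mul_rpow_eq {β c s : ℝ} (hβ : β ≠ 0) (hc : 0 < c) (hs : 0 < s) :
    ∃! ρ : ℝ, 0 < ρ ∧ c * ρ ^ β = s := by
  refine ⟨(s / c) ^ β⁻¹, ⟨by positivity, ?_⟩, ?_⟩
  · rw [Real.rpow_inv_rpow (by positivity) hβ, mul_div_cancel₀ s hc.ne']
  · rintro ρ ⟨hρ, hρs⟩
    rw [← Real.rpow_left_inj hρ.le (by positivity) hβ, Real.rpow_inv_rpow (by positivity) hβ,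
      eq_div_iff hc.ne', mul_comm, hρs]

def sonicBernoulli (γ ρ : ℝ) : ℝ := ρ ^ (γ - 1) / 2 + enth γ ρ

def massFlux (γ s ρ : ℝ) : ℝ := 2 * ρ ^ 2 * (s - enth γ ρ)

section Bernoulli

variable {γ s ρ : ℝ}

theorem enth_eq_mul_rpow (γ ρ : ℝ) : enth γ ρ = (γ - 1)⁻¹ * ρ ^ (γ - 1) := by
  rw [enth, div_eq_inv_mul]

theorem sonicBernoulli_eq_mul_rpow (γ ρ : ℝ) :
    sonicBernoulli γ ρ = (2⁻¹ + (γ - 1)⁻¹) * ρ ^ (γ - 1) := by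
  rw [sonicBernoulli, enth_eq_mul_rpow]
  ring

theorem existsUnique_enth_eq (hγ : 1 < γ) (hs : 0 < s) : ∃! ρ : ℝ, 0 < ρ ∧ enth γ ρ = s := by
  simp_rw [enth_eq_mul_rpow]
  exact Real.existsUnique_pos_mul_rpow_eq (sub_pos.2 hγ).ne' (inv_pos.2 (sub_pos.2 hγ)) hs

theorem existsUnique_sonicBernoulli_eq (hγ : 1 < γ) (hs : 0 < s) :
    ∃! ρ : ℝ, 0 < ρ ∧ sonicBernoulli γ ρ = s := by
  simp_rw [sonicBernoulli_eq_mul_rpow]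
  have hβ : 0 < γ - 1 := sub_pos.2 hγ
  exact Real.existsUnique_pos_mul_rpow_eq hβ.ne' (by positivity) hs

theorem strictMonoOn_sonicBernoulli (hγ : 1 < γ) : StrictMonoOn (sonicBernoulli γ) (Ici 0) := by
  intro a ha b _ hab
  have hβ : 0 < γ - 1 := sub_pos.2 hγ
  simp only [sonicBernoulli_eq_mul_rpow]
  exact mul_lt_mul_of_pos_left (Real.rpow_lt_rpow ha hab hβ) (by positivity)

theorem lt_of_sonicBernoulli_eq_of_enth_eq (hγ : 1 < γ) {ρst ρSt : ℝ} (hst : 0 < ρst)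
    (hsonic : sonicBernoulli γ ρst = s) (hSt : 0 < ρSt) (hstag : enth γ ρSt = s) :
    ρst < ρSt := by
  refine ((strictMonoOn_sonicBernoulli hγ).lt_iff_lt hst.le hSt.le).1 ?_
  have : 0 < ρSt ^ (γ - 1) := Real.rpow_pos_of_pos hSt _
  rw [hsonic, sonicBernoulli, hstag]
  linarith

theorem massFlux_of_sonicBernoulli_eq (hρ : 0 < ρ) (h : sonicBernoulli γ ρ = s) :
    massFlux γ s ρ = ρ ^ (γ + 1) := by
  rw [massFlux, ← h, sonicBernoulli, show γ + 1 = 2 + (γ - 1) by ring, Real.rpow_add hρ,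
    Real.rpow_two]
  ring

theorem massFlux_of_enth_eq (h : enth γ ρ = s) : massFlux γ s ρ = 0 := by
  rw [massFlux, h, sub_self, mul_zero]

theorem massFlux_eq_iff (hρ : ρ ≠ 0) {M : ℝ} :
    massFlux γ s ρ = M ↔ M / (2 * ρ ^ 2) + enth γ ρ = s := by
  rw [← eq_sub_iff_add_eq, div_eq_iff (by positivity), massFlux, mul_comm, eq_comm]

theorem hasDerivAt_enth (hγ : γ ≠ 1) (hρ : ρ ≠ 0) :
    HasDerivAt (enth γ) (ρ ^ (γ - 1) / ρ) ρ := by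
  have hβ : γ - 1 ≠ 0 := sub_ne_zero.2 hγ
  have h := (Real.hasDerivAt_rpow_const (p := γ - 1) (Or.inl hρ)).div_const (γ - 1)
  rwa [Real.rpow_sub_one hρ, mul_div_cancel_left₀ _ hβ] at h

theorem hasDerivAt_massFlux (hγ : γ ≠ 1) (hρ : ρ ≠ 0) :
    HasDerivAt (massFlux γ s) (4 * ρ * (s - sonicBernoulli γ ρ)) ρ := by
  have h := ((hasDerivAt_pow 2 ρ).const_mul 2).mul ((hasDerivAt_enth hγ hρ).const_sub s)
  refine h.congr_deriv ?_
  simp only [sonicBernoulli, enth]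
  field_simp
  ring

theorem continuousOn_massFlux (hγ : γ ≠ 1) : ContinuousOn (massFlux γ s) (Ioi 0) :=
  fun _ hρ => (hasDerivAt_massFlux hγ (ne_of_gt hρ)).continuousAt.continuousWithinAt

theorem strictAntiOn_massFlux (hγ : 1 < γ) {ρst : ℝ} (hst : 0 < ρst)
    (hsonic : sonicBernoulli γ ρst = s) : StrictAntiOn (massFlux γ s) (Ici ρst) := by
  refine strictAntiOn_of_deriv_neg (convex_Ici _)
    ((continuousOn_massFlux hγ.ne').mono fun _ hρ => hst.trans_le hρ) fun ρ hρ => ?_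
  rw [interior_Ici] at hρ
  have hρ0 : 0 < ρ := hst.trans hρ
  have hsupersonic : s < sonicBernoulli γ ρ :=
    hsonic ▸ strictMonoOn_sonicBernoulli hγ hst.le hρ0.le hρ
  rw [(hasDerivAt_massFlux hγ.ne' hρ0.ne').deriv]
  exact mul_neg_of_pos_of_neg (by positivity) (sub_neg.2 hsupersonic)

end Bernoulli

/-- **The subsonic branch of the Bernoulli relation.** For `γ > 1` and `s > 0`:
(a) there are unique `ρ_*(s), ρ^*(s) > 0` with `ρ_*^{γ-1}/2 + h(ρ_*) = s` and `h(ρ^*) = s`,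
and `ρ_* < ρ^*`; (b) `M(ρ) = 2ρ²(s − h(ρ))` is strictly decreasing on `[ρ_*, ρ^*]`, with
`M(ρ_*) = ρ_*^{γ+1}` and `M(ρ^*) = 0`; (c) for every `M ∈ [0, ρ_*^{γ+1}]` there is a unique
`ρ ∈ [ρ_*, ρ^*]` with `M/(2ρ²) + h(ρ) = s`. -/
theorem subsonic_branch (γ s : ℝ) (hγ : 1 < γ) (hs : 0 < s) :
    (∃! ρst : ℝ, 0 < ρst ∧ ρst ^ (γ - 1) / 2 + enth γ ρst = s) ∧
    (∃! ρSt : ℝ, 0 < ρSt ∧ enth γ ρSt = s) ∧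
    (∀ ρst ρSt : ℝ,
      (0 < ρst ∧ ρst ^ (γ - 1) / 2 + enth γ ρst = s) →
      (0 < ρSt ∧ enth γ ρSt = s) →
      ρst < ρSt ∧
      StrictAntiOn (fun ρ : ℝ => 2 * ρ ^ 2 * (s - enth γ ρ)) (Set.Icc ρst ρSt) ∧
      2 * ρst ^ 2 * (s - enth γ ρst) = ρst ^ (γ + 1) ∧
      2 * ρSt ^ 2 * (s - enth γ ρSt) = 0 ∧
      (∀ M : ℝ, 0 ≤ M → M ≤ ρst ^ (γ + 1) →
        ∃! ρ : ℝ, ρ ∈ Set.Icc ρst ρSt ∧ M / (2 * ρ ^ 2) + enth γ ρ = s)) := by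
  refine ⟨existsUnique_sonicBernoulli_eq hγ hs, existsUnique_enth_eq hγ hs, ?_⟩
  rintro ρst ρSt ⟨hst, hsonic⟩ ⟨hSt, hstag⟩
  have hlt := lt_of_sonicBernoulli_eq_of_enth_eq hγ hst hsonic hSt hstag
  have hanti : StrictAntiOn (massFlux γ s) (Icc ρst ρSt) :=
    (strictAntiOn_massFlux hγ hst hsonic).mono Icc_subset_Ici_self
  have hsonicFlux := massFlux_of_sonicBernoulli_eq hst hsonic
  have hstagFlux := massFlux_of_enth_eq hstag
  refine ⟨hlt, hanti, hsonicFlux, hstagFlux, fun M hM0 hMst => ?_⟩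
  have hcont : ContinuousOn (massFlux γ s) (Icc ρst ρSt) :=
    (continuousOn_massFlux hγ.ne').mono fun _ hρ => hst.trans_le hρ.1
  obtain ⟨ρ, ⟨hρ, hρM⟩, huniq⟩ :=
    hanti.existsUnique_eq_of_continuousOn hlt.le hcont (y := M) ⟨hstagFlux ▸ hM0, hsonicFlux ▸ hMst⟩
  refine ⟨ρ, ⟨hρ, (massFlux_eq_iff (hst.trans_le hρ.1).ne').1 hρM⟩, fun x ⟨hx, hxM⟩ => ?_⟩
  exact huniq x ⟨hx, (massFlux_eq_iff (hst.trans_le hx.1).ne').2 hxM⟩
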